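/- If e^{iλ} ∈ σ(U) for λ ∈ [0,2π), then λ is a root of the equation det((∏_{i=0}^{n_+−1} T_i^+(λ) − ζ_+^<(λ)·I)·T_+(λ)) = 0. -/

import Mathlib

/-!
Let `P = ∏_{k<n_+} T_k^+(λ)` and `a = α_0^+ ⋯ α_{n_+−1}^+`. Each `α_k^+ T_k^+(λ)` has the shape
`[[u, v], [conj v, conj u]]`, a shape preserved by products, so `tr P = 2A/a` with `A = A^+` real,
while `det P = |a|²/a²`. The eigenvalues of `P` are therefore `(A ± √(A² − |a|²))/a`.

If `A² ≥ |a|²`, one of them is `ζ_+^<(λ)`. If `A² < |a|²`, they are distinct and unimodular.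
Writing `φ(x) = (Ψ_L(x−1), Ψ_R(x))` for an eigenvector `Ψ`, the eigenvalue equation reads
`φ(x+1) = T_x(λ) φ(x)`, so `φ(x_+ + m n_+) = P^m φ(x_+)`; this tends to `0` because `Ψ ∈ ℓ²`,
which for unimodular eigenvalues forces `φ(x_+) = 0`. Since every `T_x(λ)` is invertible, `Ψ = 0`.
-/

open scoped Real

/-- The coin matrix `C = e^{iΔ}[[α, β], [−conj β, conj α]]`. -/
noncomputable def coinM (a b : ℂ) (d : ℝ) : Matrix (Fin 2) (Fin 2) ℂ :=
  Complex.exp (Complex.I * d) • !![a, b; -(starRingEnd ℂ b), starRingEnd ℂ a]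

/-- The transfer matrix `T(λ) = (1/α)[[e^{i(λ−Δ)}, −β], [−conj β, e^{−i(λ−Δ)}]]`. -/
noncomputable def transferM (a b : ℂ) (d l : ℝ) : Matrix (Fin 2) (Fin 2) ℂ :=
  a⁻¹ • !![Complex.exp (Complex.I * (l - d)), -b;
           -(starRingEnd ℂ b), Complex.exp (-(Complex.I * (l - d)))]

/-- Square-summability of `Ψ : ℤ → ℂ²`, i.e. `Σ_{x∈ℤ} ‖Ψ(x)‖²_{ℂ²} < ∞`. -/
def SqSummable (Ψ : ℤ → Fin 2 → ℂ) : Prop :=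
  Summable fun x : ℤ => ‖Ψ x 0‖ ^ 2 + ‖Ψ x 1‖ ^ 2

/-- The time evolution `U = SC`:  `(UΨ)(x) = ((C_{x+1}Ψ(x+1))_L, (C_{x−1}Ψ(x−1))_R)ᵀ`. -/
noncomputable def Uact (C : ℤ → Matrix (Fin 2) (Fin 2) ℂ) (Ψ : ℤ → Fin 2 → ℂ) :
    ℤ → Fin 2 → ℂ :=
  fun x => ![(C (x + 1)).mulVec (Ψ (x + 1)) 0, (C (x - 1)).mulVec (Ψ (x - 1)) 1]

/-- The inverse of the unitary `J`:  `(J⁻¹Ψ)(x) = (Ψ_L(x+1), Ψ_R(x))ᵀ`. -/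
def JinvAct (Ψ : ℤ → Fin 2 → ℂ) : ℤ → Fin 2 → ℂ := fun x => ![Ψ (x + 1) 0, Ψ x 1]

/-- Ordered product `∏_{i=0}^{n-1} T_i = T_{n-1} ⋯ T_1 T_0`. -/
noncomputable def prodRev (T : ℕ → Matrix (Fin 2) (Fin 2) ℂ) : ℕ → Matrix (Fin 2) (Fin 2) ℂ
  | 0 => 1
  | n + 1 => T n * prodRev T n

/-- `T_{n−1} T_{n−2} ⋯ T_1 T_0` for matrices indexed by `ℤ`. -/
noncomputable def prodZpos (T : ℤ → Matrix (Fin 2) (Fin 2) ℂ) :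
    ℕ → Matrix (Fin 2) (Fin 2) ℂ
  | 0 => 1
  | n + 1 => T n * prodZpos T n

/-- `T_{−n}⁻¹ T_{−n+1}⁻¹ ⋯ T_{−2}⁻¹ T_{−1}⁻¹` for matrices indexed by `ℤ`. -/
noncomputable def prodZneg (T : ℤ → Matrix (Fin 2) (Fin 2) ℂ) :
    ℕ → Matrix (Fin 2) (Fin 2) ℂ
  | 0 => 1
  | n + 1 => (T (-(n + 1 : ℕ)))⁻¹ * prodZneg T n

/-- `A = (1/2)·α_0⋯α_{n−1}·tr(∏_{i=0}^{n−1} T_i)` (a real number, taken via its real part). -/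
noncomputable def Adef (αs : ℕ → ℂ) (Ts : ℕ → Matrix (Fin 2) (Fin 2) ℂ) (n : ℕ) : ℝ :=
  ((1 / 2 : ℂ) * (∏ i ∈ Finset.range n, αs i) * (prodRev Ts n).trace).re

/-- `ζ^< = (A − sgn(A)·√(A² − |α_0|²⋯|α_{n−1}|²))/(α_0⋯α_{n−1})`. -/
noncomputable def zetaLT (αs : ℕ → ℂ) (Ts : ℕ → Matrix (Fin 2) (Fin 2) ℂ) (n : ℕ) : ℂ :=
  ((Adef αs Ts n : ℂ) -
      ((Real.sign (Adef αs Ts n) *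
        Real.sqrt ((Adef αs Ts n) ^ 2 - ∏ i ∈ Finset.range n, ‖αs i‖ ^ 2) : ℝ) : ℂ)) /
    ∏ i ∈ Finset.range n, αs i

/-- `ζ^> = (A + sgn(A)·√(A² − |α_0|²⋯|α_{n−1}|²))/(α_0⋯α_{n−1})`. -/
noncomputable def zetaGT (αs : ℕ → ℂ) (Ts : ℕ → Matrix (Fin 2) (Fin 2) ℂ) (n : ℕ) : ℂ :=
  ((Adef αs Ts n : ℂ) +
      ((Real.sign (Adef αs Ts n) *
        Real.sqrt ((Adef αs Ts n) ^ 2 - ∏ i ∈ Finset.range n, ‖αs i‖ ^ 2) : ℝ) : ℂ)) /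
    ∏ i ∈ Finset.range n, αs i

open Matrix Filter Topology

section TwoByTwo

variable {K : Type*} [CommRing K]

theorem det_sub_smul_one_fin_two (M : Matrix (Fin 2) (Fin 2) K) (z : K) :
    (M - z • 1).det = z ^ 2 - M.trace * z + M.det := by
  simp only [det_fin_two, Fin.isValue, Matrix.sub_apply, Matrix.smul_apply, one_apply, ↓reduceIte,
    smul_eq_mul, mul_one, zero_ne_one, mul_zero, sub_zero, one_ne_zero, trace_fin_two]
  ring

theorem sub_smul_one_mul_sub_smul_one_fin_two (M : Matrix (Fin 2) (Fin 2) K) {z₁ z₂ : K}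
    (htr : M.trace = z₁ + z₂) (hdet : M.det = z₁ * z₂) :
    (M - z₁ • 1) * (M - z₂ • 1) = 0 := by
  rw [trace_fin_two] at htr
  rw [det_fin_two] at hdet
  ext i j
  fin_cases i <;> fin_cases j <;>
    simp only [Fin.zero_eta, Fin.mk_one, Fin.isValue, mul_apply, Matrix.sub_apply,
      Matrix.smul_apply, one_apply, Nat.reduceAdd, smul_eq_mul, mul_ite, mul_one, mul_zero,
      Fin.sum_univ_two, ↓reduceIte, zero_ne_one, one_ne_zero, sub_zero, Matrix.zero_apply]
  · linear_combination M 0 0 * htr - hdet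
  · linear_combination M 0 1 * htr
  · linear_combination M 1 0 * htr
  · linear_combination M 1 1 * htr - hdet

end TwoByTwo

theorem eq_zero_of_mulVec_eq_smul_of_tendsto {n : Type*} [Fintype n] [DecidableEq n]
    {P : Matrix n n ℂ} {z : ℂ} (hz : ‖z‖ = 1) {v : n → ℂ} (hv : P *ᵥ v = z • v)
    (hlim : Tendsto (fun m : ℕ => (P ^ m) *ᵥ v) atTop (𝓝 0)) : v = 0 := by
  have hpow : ∀ m : ℕ, (P ^ m) *ᵥ v = z ^ m • v := by
    intro m
    induction m with
    | zero => simp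
    | succ m ih => rw [pow_succ, ← mulVec_mulVec, hv, mulVec_smul, ih, smul_smul, pow_succ']
  have hnorm : Tendsto (fun _ : ℕ => ‖v‖) atTop (𝓝 0) := by
    simpa [hpow, norm_smul, hz] using hlim.norm
  exact norm_eq_zero.1 (tendsto_nhds_unique tendsto_const_nhds hnorm)

theorem eq_zero_of_tendsto_pow_mulVec_fin_two {P : Matrix (Fin 2) (Fin 2) ℂ} {z₁ z₂ : ℂ}
    (htr : P.trace = z₁ + z₂) (hdet : P.det = z₁ * z₂) (hne : z₁ ≠ z₂)
    (h₁ : ‖z₁‖ = 1) (h₂ : ‖z₂‖ = 1) {w : Fin 2 → ℂ}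
    (hw : Tendsto (fun m : ℕ => (P ^ m) *ᵥ w) atTop (𝓝 0)) : w = 0 := by
  have hcomponent : ∀ {a b : ℂ}, P.trace = a + b → P.det = a * b → ‖a‖ = 1 →
      (P - b • 1) *ᵥ w = 0 := by
    intro a b htr hdet ha
    refine eq_zero_of_mulVec_eq_smul_of_tendsto (P := P) ha ?_ ?_
    · have hCH := congrArg (· *ᵥ w) (sub_smul_one_mul_sub_smul_one_fin_two P htr hdet)
      simp only [← mulVec_mulVec, zero_mulVec] at hCH
      rwa [sub_mulVec, smul_mulVec, one_mulVec, sub_eq_zero] at hCH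
    · have hcomm : ∀ m : ℕ, (P ^ m) *ᵥ ((P - b • 1) *ᵥ w) = (P - b • 1) *ᵥ ((P ^ m) *ᵥ w) := by
        intro m
        rw [mulVec_mulVec, mulVec_mulVec, ((Commute.sub_right (Commute.refl P)
          ((Commute.one_right P).smul_right b)).pow_left m).eq]
      simp only [hcomm]
      have hcont : Continuous fun u : Fin 2 → ℂ => (P - b • 1) *ᵥ u :=
        continuous_const.matrix_mulVec continuous_id
      simpa only [Function.comp_def, mulVec_zero] using (hcont.tendsto 0).comp hw
  have hz₂ := hcomponent htr hdet h₁
  have hz₁ := hcomponent (by rw [htr, add_comm]) (by rw [hdet, mul_comm]) h₂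
  have hsmul : (z₁ - z₂) • w = 0 :=
    calc (z₁ - z₂) • w = (P - z₂ • 1) *ᵥ w - (P - z₁ • 1) *ᵥ w := by
          simp only [sub_mulVec, smul_mulVec, one_mulVec, sub_smul]
          abel
      _ = 0 := by rw [hz₁, hz₂, sub_zero]
  exact (smul_eq_zero.1 hsmul).resolve_left (sub_ne_zero.2 hne)

section Floquet

variable {P : Matrix (Fin 2) (Fin 2) ℂ} {a : ℂ} {A : ℝ}

theorem det_sub_smul_one_eq_zero_of_sq_le (ha : a ≠ 0) (htr : P.trace = 2 * A / a)
    (hdet : P.det = (‖a‖ : ℂ) ^ 2 / a ^ 2) (h : ‖a‖ ^ 2 ≤ A ^ 2) :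
    (P - (((A : ℂ) - ((Real.sign A * √(A ^ 2 - ‖a‖ ^ 2) : ℝ) : ℂ)) / a) • 1).det = 0 := by
  have hA : A ≠ 0 := by
    rintro rfl
    have : 0 < ‖a‖ := norm_pos_iff.2 ha
    nlinarith
  have hsign : (Real.sign A : ℂ) ^ 2 = 1 := by
    rcases Real.sign_apply_eq_of_ne_zero A hA with hs | hs <;> simp [hs]
  have hsqrt : ((√(A ^ 2 - ‖a‖ ^ 2) : ℝ) : ℂ) ^ 2 = (A : ℂ) ^ 2 - (‖a‖ : ℂ) ^ 2 := by
    rw [← Complex.ofReal_pow, Real.sq_sqrt (sub_nonneg.2 h)]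
    push_cast
    ring
  rw [det_sub_smul_one_fin_two, htr, hdet]
  field_simp
  push_cast
  linear_combination (((√(A ^ 2 - ‖a‖ ^ 2) : ℝ) : ℂ) ^ 2) * hsign + hsqrt

theorem eq_zero_of_tendsto_pow_mulVec_of_sq_lt (ha : a ≠ 0) (htr : P.trace = 2 * A / a)
    (hdet : P.det = (‖a‖ : ℂ) ^ 2 / a ^ 2) (h : A ^ 2 < ‖a‖ ^ 2) {w : Fin 2 → ℂ}
    (hw : Tendsto (fun m : ℕ => (P ^ m) *ᵥ w) atTop (𝓝 0)) : w = 0 := by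
  set q := √(‖a‖ ^ 2 - A ^ 2)
  have hq : q ^ 2 = ‖a‖ ^ 2 - A ^ 2 := Real.sq_sqrt (sub_nonneg.2 h.le)
  have hqC : (q : ℂ) ^ 2 = (‖a‖ : ℂ) ^ 2 - (A : ℂ) ^ 2 := by exact_mod_cast hq
  have hq0 : q ≠ 0 := (Real.sqrt_pos.2 (sub_pos.2 h)).ne'
  have hnorm : ∀ s : ℝ, s ^ 2 = q ^ 2 → ‖((A : ℂ) + s * Complex.I) / a‖ = 1 := by
    intro s hs
    rw [norm_div, Complex.norm_add_mul_I, hs, hq, add_sub_cancel, Real.sqrt_sq (norm_nonneg a),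
      div_self (norm_ne_zero_iff.2 ha)]
  refine eq_zero_of_tendsto_pow_mulVec_fin_two (z₁ := ((A : ℂ) + q * Complex.I) / a)
    (z₂ := ((A : ℂ) + ((-q : ℝ) : ℂ) * Complex.I) / a) ?_ ?_ ?_ (hnorm q rfl)
    (hnorm (-q) (neg_sq q)) hw
  · rw [htr]
    field_simp
    push_cast
    ring
  · rw [hdet]
    field_simp
    push_cast
    linear_combination (-1 : ℂ) * hqC + (q : ℂ) ^ 2 * Complex.I_sq
  · intro heq
    rw [div_left_inj' ha, add_right_inj] at heq
    have hqq : (q : ℂ) = ((-q : ℝ) : ℂ) := mul_right_cancel₀ Complex.I_ne_zero heq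
    apply hq0
    exact_mod_cast (by push_cast at hqq; linear_combination hqq / 2 : (q : ℂ) = 0)

end Floquet

theorem prodRev_smul (c : ℕ → ℂ) (T : ℕ → Matrix (Fin 2) (Fin 2) ℂ) (n : ℕ) :
    prodRev (fun k => c k • T k) n = (∏ k ∈ Finset.range n, c k) • prodRev T n := by
  induction n with
  | zero => simp [prodRev]
  | succ n ih => rw [prodRev, prodRev, ih, Finset.prod_range_succ, smul_mul_smul_comm, mul_comm]

theorem det_prodRev (T : ℕ → Matrix (Fin 2) (Fin 2) ℂ) (n : ℕ) :
    (prodRev T n).det = ∏ k ∈ Finset.range n, (T k).det := by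
  induction n with
  | zero => simp [prodRev]
  | succ n ih => rw [prodRev, det_mul, ih, Finset.prod_range_succ, mul_comm]

theorem prodRev_mem (S : Submonoid (Matrix (Fin 2) (Fin 2) ℂ)) {T : ℕ → Matrix (Fin 2) (Fin 2) ℂ}
    {n : ℕ} (hT : ∀ k < n, T k ∈ S) : prodRev T n ∈ S := by
  induction n with
  | zero => exact S.one_mem
  | succ n ih =>
    exact S.mul_mem (hT n n.lt_succ_self) (ih fun k hk => hT k (hk.trans n.lt_succ_self))

open ComplexConjugate in
def conjSymmSubmonoid : Submonoid (Matrix (Fin 2) (Fin 2) ℂ) where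
  carrier := {N | N 1 1 = conj (N 0 0) ∧ N 1 0 = conj (N 0 1)}
  mul_mem' := by
    rintro M N ⟨hM₁, hM₂⟩ ⟨hN₁, hN₂⟩
    simp only [Set.mem_ofPred_eq, mul_apply, Fin.sum_univ_two, map_add, map_mul, hM₁, hM₂, hN₁, hN₂,
      Complex.conj_conj]
    constructor <;> ring
  one_mem' := by simp

theorem trace_eq_of_mem_conjSymmSubmonoid {N : Matrix (Fin 2) (Fin 2) ℂ}
    (hN : N ∈ conjSymmSubmonoid) : N.trace = 2 * ((N 0 0).re : ℂ) := by
  rw [trace_fin_two, hN.1, Complex.add_conj, Complex.ofReal_mul, Complex.ofReal_ofNat]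

theorem det_transferM {a b : ℂ} (d l : ℝ) (hab : ‖a‖ ^ 2 + ‖b‖ ^ 2 = 1) :
    (transferM a b d l).det = (‖a‖ : ℂ) ^ 2 / a ^ 2 := by
  have hab' : (‖a‖ : ℂ) ^ 2 + (‖b‖ : ℂ) ^ 2 = 1 := by exact_mod_cast hab
  rw [transferM, det_smul, det_fin_two_of, ← Complex.exp_add, add_neg_cancel, Complex.exp_zero,
    Fintype.card_fin, inv_pow, neg_mul_neg, Complex.mul_conj']
  linear_combination (-1 / a ^ 2) * hab'

theorem smul_transferM_mem_conjSymmSubmonoid {a : ℂ} (b : ℂ) (d l : ℝ) (ha : a ≠ 0) :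
    a • transferM a b d l ∈ conjSymmSubmonoid := by
  rw [transferM, smul_smul, mul_inv_cancel₀ ha, one_smul]
  refine ⟨?_, by simp⟩
  simp [← Complex.exp_conj, Complex.conj_ofReal]

section TransferProduct

variable (αs βs : ℕ → ℂ) (Δs : ℕ → ℝ) (l : ℝ) {n : ℕ}

theorem trace_prodRev_transferM (hα : ∀ k < n, αs k ≠ 0) :
    (prodRev (fun k => transferM (αs k) (βs k) (Δs k) l) n).trace =
      2 * Adef αs (fun k => transferM (αs k) (βs k) (Δs k) l) n / ∏ i ∈ Finset.range n, αs i := by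
  have ha : ∏ i ∈ Finset.range n, αs i ≠ 0 :=
    Finset.prod_ne_zero_iff.2 fun k hk => hα k (Finset.mem_range.1 hk)
  have hmem := prodRev_mem conjSymmSubmonoid fun k hk =>
    smul_transferM_mem_conjSymmSubmonoid (βs k) (Δs k) l (hα k hk)
  have htr := trace_eq_of_mem_conjSymmSubmonoid hmem
  rw [prodRev_smul, trace_smul, smul_eq_mul] at htr
  rw [Adef, mul_assoc, htr, one_div, inv_mul_cancel_left₀ two_ne_zero, Complex.ofReal_re,
    eq_div_iff ha, mul_comm, htr]

theorem det_prodRev_transferM (hαβ : ∀ k < n, ‖αs k‖ ^ 2 + ‖βs k‖ ^ 2 = 1) :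
    (prodRev (fun k => transferM (αs k) (βs k) (Δs k) l) n).det =
      (‖∏ i ∈ Finset.range n, αs i‖ : ℂ) ^ 2 / (∏ i ∈ Finset.range n, αs i) ^ 2 := by
  rw [det_prodRev, Finset.prod_congr rfl fun k hk => det_transferM (Δs k) l
    (hαβ k (Finset.mem_range.1 hk)), Finset.prod_div_distrib, Finset.prod_pow, Finset.prod_pow,
    norm_prod, Complex.ofReal_prod]

end TransferProduct

def walkVec (Ψ : ℤ → Fin 2 → ℂ) (x : ℤ) : Fin 2 → ℂ := ![Ψ (x - 1) 0, Ψ x 1]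

theorem walkVec_succ {α β : ℤ → ℂ} {Δ : ℤ → ℝ} {l : ℝ} {Ψ : ℤ → Fin 2 → ℂ}
    (heig : Uact (fun x => coinM (α x) (β x) (Δ x)) Ψ = Complex.exp (Complex.I * l) • Ψ)
    {x : ℤ} (hα : α x ≠ 0) (hαβ : ‖α x‖ ^ 2 + ‖β x‖ ^ 2 = 1) :
    walkVec Ψ (x + 1) = transferM (α x) (β x) (Δ x) l *ᵥ walkVec Ψ x := by
  have hL := congrFun (congrFun heig (x - 1)) 0
  have hR := congrFun (congrFun heig (x + 1)) 1
  simp only [Uact, coinM, sub_add_cancel, add_sub_cancel_right, Pi.smul_apply, mulVec, dotProduct,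
    Fin.sum_univ_two, Matrix.smul_apply, of_apply, cons_val', cons_val_zero, cons_val_one,
    cons_val_fin_one, smul_eq_mul] at hL hR
  have hab : starRingEnd ℂ (α x) * α x + starRingEnd ℂ (β x) * β x = 1 := by
    rw [Complex.conj_mul', Complex.conj_mul']
    exact_mod_cast hαβ
  have hD := Complex.exp_ne_zero (Complex.I * Δ x)
  have hE := Complex.exp_ne_zero (Complex.I * l)
  ext i
  fin_cases i <;>
    simp only [Fin.zero_eta, Fin.mk_one, walkVec, add_sub_cancel_right, transferM, mulVec,
      dotProduct, Fin.sum_univ_two, Matrix.smul_apply, of_apply, cons_val', cons_val_zero,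
      cons_val_one, cons_val_fin_one, smul_eq_mul, mul_sub, neg_sub, Complex.exp_sub]
  · field_simp
    linear_combination hL
  · field_simp
    linear_combination (-(α x)) * hR - starRingEnd ℂ (β x) * hL
      + Complex.exp (Complex.I * Δ x) * Ψ x 1 * hab

theorem eq_zero_of_mulVec_recursion {n R : Type*} [Fintype n] [DecidableEq n] [CommRing R]
    [NoZeroDivisors R] {T : ℤ → Matrix n n R} {φ : ℤ → n → R} (hT : ∀ x, (T x).det ≠ 0)
    (hφ : ∀ x, φ (x + 1) = T x *ᵥ φ x) {x₀ : ℤ} (h₀ : φ x₀ = 0) (x : ℤ) : φ x = 0 := by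
  induction x using Int.inductionOn' (b := x₀) with
  | zero => exact h₀
  | succ k _ ih => rw [hφ, ih, mulVec_zero]
  | pred k _ ih => exact eq_zero_of_mulVec_eq_zero (hT (k - 1)) (by rw [← hφ, sub_add_cancel, ih])

theorem walkVec_ne_zero {α β : ℤ → ℂ} {Δ : ℤ → ℝ} {l : ℝ} {Ψ : ℤ → Fin 2 → ℂ}
    (heig : Uact (fun x => coinM (α x) (β x) (Δ x)) Ψ = Complex.exp (Complex.I * l) • Ψ)
    (hα : ∀ x, α x ≠ 0) (hαβ : ∀ x, ‖α x‖ ^ 2 + ‖β x‖ ^ 2 = 1) (hΨ : Ψ ≠ 0) (x₀ : ℤ) :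
    walkVec Ψ x₀ ≠ 0 := by
  intro h₀
  have hdet (x : ℤ) : (transferM (α x) (β x) (Δ x) l).det ≠ 0 := by
    rw [det_transferM _ _ (hαβ x)]
    exact div_ne_zero (by simpa using hα x) (pow_ne_zero 2 (hα x))
  have hzero := eq_zero_of_mulVec_recursion hdet (fun x => walkVec_succ heig (hα x) (hαβ x)) h₀
  apply hΨ
  funext x i
  fin_cases i
  · simpa [walkVec] using congrFun (hzero (x + 1)) 0
  · simpa [walkVec] using congrFun (hzero x) 1

theorem SqSummable.tendsto_cofinite_zero {Ψ : ℤ → Fin 2 → ℂ} (hΨ : SqSummable Ψ) :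
    Tendsto Ψ cofinite (𝓝 0) := by
  have hsqrt : Tendsto (fun x => √(‖Ψ x 0‖ ^ 2 + ‖Ψ x 1‖ ^ 2)) cofinite (𝓝 0) := by
    simpa only [Function.comp_def, Real.sqrt_zero] using
      (Real.continuous_sqrt.tendsto 0).comp (Summable.tendsto_cofinite_zero hΨ)
  refine tendsto_pi_nhds.2 fun i => tendsto_zero_iff_norm_tendsto_zero.2 ?_
  refine squeeze_zero (fun x => norm_nonneg _) (fun x => ?_) hsqrt
  rw [← abs_norm]
  apply Real.abs_le_sqrt
  fin_cases i <;> simp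

theorem SqSummable.tendsto_walkVec {Ψ : ℤ → Fin 2 → ℂ} (hΨ : SqSummable Ψ) :
    Tendsto (walkVec Ψ) cofinite (𝓝 0) := by
  have h := tendsto_pi_nhds.1 hΨ.tendsto_cofinite_zero
  refine tendsto_pi_nhds.2 fun i => ?_
  fin_cases i
  · exact (h 0).comp (sub_left_injective (b := 1)).tendsto_cofinite
  · exact h 1

theorem mulVec_pow_prodRev_of_periodic (T : ℕ → Matrix (Fin 2) (Fin 2) ℂ) (n : ℕ)
    {f : ℕ → Fin 2 → ℂ} (hf : ∀ j, f (j + 1) = T (j % n) *ᵥ f j) (m : ℕ) :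
    f (n * m) = (prodRev T n ^ m) *ᵥ f 0 := by
  have hperiod (m k : ℕ) (hk : k ≤ n) : f (n * m + k) = prodRev T k *ᵥ f (n * m) := by
    induction k with
    | zero => simp [prodRev]
    | succ k ih =>
      rw [← add_assoc, hf, Nat.mul_add_mod, Nat.mod_eq_of_lt hk, ih (by omega), mulVec_mulVec]
      rfl
  induction m with
  | zero => simp
  | succ m ih => rw [Nat.mul_succ, hperiod m n le_rfl, ih, mulVec_mulVec, pow_succ']

theorem det_eq_zero_of_eigenvalue_general
    (α β : ℤ → ℂ) (Δ : ℤ → ℝ)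
    (hα : ∀ x, α x ≠ 0)
    (hαβ : ∀ x, ‖α x‖ ^ 2 + ‖β x‖ ^ 2 = 1)
    (xp : ℤ)
    (np : ℕ) (hnp : 0 < np)
    (αp βp : ℕ → ℂ) (Δp : ℕ → ℝ)
    (hαp : ∀ k < np, αp k ≠ 0)
    (hαβp : ∀ k < np, ‖αp k‖ ^ 2 + ‖βp k‖ ^ 2 = 1)
    (hper_p : ∀ x : ℤ, xp ≤ x →
      α x = αp ((x - xp) % (np : ℤ)).toNat ∧ β x = βp ((x - xp) % (np : ℤ)).toNat ∧
        Δ x = Δp ((x - xp) % (np : ℤ)).toNat)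
    (l : ℝ)
    (hσ : ∃ Ψ : ℤ → Fin 2 → ℂ, SqSummable Ψ ∧ Ψ ≠ 0 ∧
        Uact (fun x => coinM (α x) (β x) (Δ x)) Ψ = Complex.exp (Complex.I * l) • Ψ) :
    ((prodRev (fun k => transferM (αp k) (βp k) (Δp k) l) np -
          zetaLT αp (fun k => transferM (αp k) (βp k) (Δp k) l) np • 1) *
        prodZpos (fun x => transferM (α x) (β x) (Δ x) l) xp.toNat).det = 0 := by
  obtain ⟨Ψ, hΨ, hΨne, heig⟩ := hσ
  set T : ℕ → Matrix (Fin 2) (Fin 2) ℂ := fun k => transferM (αp k) (βp k) (Δp k) l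
  set a := ∏ i ∈ Finset.range np, αp i
  have ha : a ≠ 0 := Finset.prod_ne_zero_iff.2 fun k hk => hαp k (Finset.mem_range.1 hk)
  have htr := trace_prodRev_transferM αp βp Δp l hαp
  have hdet := det_prodRev_transferM αp βp Δp l hαβp
  have hstep (j : ℕ) : walkVec Ψ (xp + (j + 1 : ℕ)) = T (j % np) *ᵥ walkVec Ψ (xp + j) := by
    obtain ⟨h₁, h₂, h₃⟩ := hper_p (xp + j) (le_add_of_nonneg_right j.cast_nonneg)
    rw [add_sub_cancel_left, ← Int.natCast_mod, Int.toNat_natCast] at h₁ h₂ h₃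
    rw [Nat.cast_succ, ← add_assoc, walkVec_succ heig (hα _) (hαβ _), h₁, h₂, h₃]
  have hinj : Function.Injective fun m : ℕ => xp + (np * m : ℕ) := fun m m' h => by
    simpa [hnp.ne'] using h
  have hdecay : Tendsto (fun m : ℕ => prodRev T np ^ m *ᵥ walkVec Ψ xp) atTop (𝓝 0) := by
    have hiter (m : ℕ) : walkVec Ψ (xp + (np * m : ℕ)) = prodRev T np ^ m *ᵥ walkVec Ψ xp := by
      simpa using mulVec_pow_prodRev_of_periodic T np (f := fun j => walkVec Ψ (xp + j)) hstep m
    have h := hΨ.tendsto_walkVec.comp (Nat.cofinite_eq_atTop ▸ hinj.tendsto_cofinite)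
    simpa only [Function.comp_def, hiter] using h
  have hsq : ‖a‖ ^ 2 ≤ Adef αp T np ^ 2 := not_lt.1 fun h => walkVec_ne_zero heig hα hαβ hΨne xp
    (eq_zero_of_tendsto_pow_mulVec_of_sq_lt ha htr hdet h hdecay)
  rw [det_mul, zetaLT, Finset.prod_pow, ← norm_prod]
  exact mul_eq_zero_of_left (det_sub_smul_one_eq_zero_of_sq_le ha htr hdet hsq) _

/-- If `e^{iλ} ∈ σ(U)`, then `λ` is a root of the equation
`det((∏_{i=0}^{n_+−1} T_i^+(λ) − ζ_+^<(λ)·I)·T_+(λ)) = 0`. -/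
theorem det_eq_zero_of_eigenvalue
    (α β : ℤ → ℂ) (Δ : ℤ → ℝ)
    (hα : ∀ x, α x ≠ 0)
    (hαβ : ∀ x, ‖α x‖ ^ 2 + ‖β x‖ ^ 2 = 1)
    (hΔ : ∀ x, 0 ≤ Δ x ∧ Δ x < 2 * π)
    (xp xm : ℤ) (hxp : 0 ≤ xp) (hxm : xm ≤ 0)
    (np nm : ℕ) (hnp : 0 < np) (hnm : 0 < nm)
    (αp βp : ℕ → ℂ) (Δp : ℕ → ℝ) (αm βm : ℕ → ℂ) (Δm : ℕ → ℝ)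
    (hαp : ∀ k < np, αp k ≠ 0)
    (hαβp : ∀ k < np, ‖αp k‖ ^ 2 + ‖βp k‖ ^ 2 = 1)
    (hΔp : ∀ k < np, 0 ≤ Δp k ∧ Δp k < 2 * π)
    (hαm : ∀ k < nm, αm k ≠ 0)
    (hαβm : ∀ k < nm, ‖αm k‖ ^ 2 + ‖βm k‖ ^ 2 = 1)
    (hΔm : ∀ k < nm, 0 ≤ Δm k ∧ Δm k < 2 * π)
    (hper_p : ∀ x : ℤ, xp ≤ x →
      α x = αp ((x - xp) % (np : ℤ)).toNat ∧ β x = βp ((x - xp) % (np : ℤ)).toNat ∧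
        Δ x = Δp ((x - xp) % (np : ℤ)).toNat)
    (hper_m : ∀ x : ℤ, x < xm →
      α x = αm ((x - xm) % (nm : ℤ)).toNat ∧ β x = βm ((x - xm) % (nm : ℤ)).toNat ∧
        Δ x = Δm ((x - xm) % (nm : ℤ)).toNat)
    (l : ℝ) (hl : 0 ≤ l ∧ l < 2 * π)
    (hσ : ∃ Ψ : ℤ → Fin 2 → ℂ, SqSummable Ψ ∧ Ψ ≠ 0 ∧
        Uact (fun x => coinM (α x) (β x) (Δ x)) Ψ = Complex.exp (Complex.I * l) • Ψ) :
    ((prodRev (fun k => transferM (αp k) (βp k) (Δp k) l) np -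
          zetaLT αp (fun k => transferM (αp k) (βp k) (Δp k) l) np • 1) *
        prodZpos (fun x => transferM (α x) (β x) (Δ x) l) xp.toNat).det = 0 :=
  det_eq_zero_of_eigenvalue_general α β Δ hα hαβ xp np hnp αp βp Δp hαp hαβp hper_p l hσ
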